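/- Let Δ = Δ_0 + Δ_1 + ⋯ + Δ_k be a Minkowski sum decomposition of a reflexive polytope Δ ⊂ ℝ^d into lattice polytopes. Define ∇̂_0 = Conv({u − Σ_{i=1}^k min⟨Δ_i,u⟩ e_i* : u ∈ Δ*} ∪ {e_1*, …, e_k*}) ⊂ ℝ^d ⊕ ℝ^k and ∇̂_i = ∇̂_0 − e_i* for i = 1,…,k. Then ∇̂_0 + ∇̂_1 + ⋯ + ∇̂_k = (k+1)∇̂_0 + e_0* is a reflexive polytope in ℝ^d ⊕ ℝ^k with respect to the lattice ℤ^d ⊕ ℤ^k, and its dual reflexive polytope is (∇̂_0 + ⋯ + ∇̂_k)* = Conv(Δ_0 + e_0, Δ_1 + e_1, …, Δ_k + e_k). -/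

import Mathlib

/-!
Write `hᵢ(u) = min⟨Δᵢ,u⟩` and `h = Σ hᵢ = min⟨Δ,u⟩`. A point `z = (z', z'')` lies in the dual
of the Cayley polytope `P = Conv(Δᵢ + eᵢ)` iff `hᵢ(z') + ⟨eᵢ, z''⟩ ≥ -1` for every `i`, and the
affine map `q ↦ (k+1)q + e₀*` carries `∇̂₀` onto exactly this set: the generators of `∇̂₀` satisfy
the inequalities, and conversely a solution `q = (u, v)` is the convex combination
`r • lift(u/r) + Σ δⱼ eⱼ*` with `δⱼ = hⱼ(u) + vⱼ ≥ 0` and `r = 1 - Σ δⱼ ≥ -h(u) ≥ 0`, where `r = 0`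
forces `u = 0` because `0` is interior to `Δ`. Since the `∇̂ᵢ` are translates of the convex set
`∇̂₀`, their sum is `(k+1)∇̂₀ + e₀* = P*`, and `P** = P` by Hahn–Banach, `P` being a closed convex
set containing `0`.

The sum is a lattice polytope because `∇̂₀` is already the hull of the `eⱼ*` and the lifts of `0`
and of the vertices of `Δ*`: a point of the facet `h = -1` of `Δ*` is a convex combination of
vertices, along which the concave `hᵢ` are all affine because their sum `h` is; and the `hᵢ` are
integral on lattice vectors.
-/

open scoped Pointwise
open Set

noncomputable section

/-- The standard pairing on `ℝ^n`. -/
def pairing {n : ℕ} (x y : Fin n → ℝ) : ℝ := ∑ i, x i * y i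

/-- A point of `ℝ^n` lying in the lattice `ℤ^n`. -/
def IsLatticePt {n : ℕ} (x : Fin n → ℝ) : Prop := ∀ i, ∃ z : ℤ, x i = (z : ℝ)

/-- A lattice polytope: the convex hull of finitely many lattice points. -/
def IsLatticePolytope {n : ℕ} (P : Set (Fin n → ℝ)) : Prop :=
  ∃ S : Set (Fin n → ℝ), S.Finite ∧ (∀ x ∈ S, IsLatticePt x) ∧ P = convexHull ℝ S

/-- The dual polytope `P* = {y | ⟨x,y⟩ ≥ -1 ∀ x ∈ P}`. -/
def polarDual {n : ℕ} (P : Set (Fin n → ℝ)) : Set (Fin n → ℝ) :=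
  {y | ∀ x ∈ P, -1 ≤ pairing x y}

/-- A reflexive polytope. -/
def IsReflexive {n : ℕ} (P : Set (Fin n → ℝ)) : Prop :=
  IsLatticePolytope P ∧ (0 : Fin n → ℝ) ∈ interior P ∧ IsLatticePolytope (polarDual P)

/-- `min⟨P, u⟩ = min_{x ∈ P} ⟨x, u⟩`. -/
def minPair {n : ℕ} (P : Set (Fin n → ℝ)) (u : Fin n → ℝ) : ℝ :=
  sInf ((fun x => pairing x u) '' P)

/-- The real vector space `ℝ^d ⊕ ℝ^k`. -/
abbrev Vdk (d k : ℕ) := (Fin d → ℝ) × (Fin k → ℝ)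

/-- The pairing on `ℝ^d ⊕ ℝ^k` (sum of the two standard pairings). -/
def pairingV {d k : ℕ} (x y : Vdk d k) : ℝ := pairing x.1 y.1 + pairing x.2 y.2

def IsLatticePtV {d k : ℕ} (x : Vdk d k) : Prop := IsLatticePt x.1 ∧ IsLatticePt x.2

def IsLatticePolytopeV {d k : ℕ} (P : Set (Vdk d k)) : Prop :=
  ∃ S : Set (Vdk d k), S.Finite ∧ (∀ x ∈ S, IsLatticePtV x) ∧ P = convexHull ℝ S

def polarDualV {d k : ℕ} (P : Set (Vdk d k)) : Set (Vdk d k) :=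
  {y | ∀ x ∈ P, -1 ≤ pairingV x y}

def IsReflexiveV {d k : ℕ} (P : Set (Vdk d k)) : Prop :=
  IsLatticePolytopeV P ∧ (0 : Vdk d k) ∈ interior P ∧ IsLatticePolytopeV (polarDualV P)

/-- The Cayley cone `σ̄ = {(t₀Δ₀ + ⋯ + t_kΔ_k, t₀, …, t_k) : tᵢ ≥ 0} ⊆ ℝ^d ⊕ ℝ^{k+1}`. -/
def cayleyCone {d k : ℕ} (Δ : Fin (k+1) → Set (Fin d → ℝ)) : Set (Vdk d (k+1)) :=
  {p | (∀ i, 0 ≤ p.2 i) ∧ p.1 ∈ ∑ i, p.2 i • Δ i}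

/-- The dual cone of a cone in `ℝ^d ⊕ ℝ^k`. -/
def dualConeV {d k : ℕ} (σ : Set (Vdk d k)) : Set (Vdk d k) :=
  {y | ∀ x ∈ σ, 0 ≤ pairingV x y}

/-- `e₀ = −(e₁ + ⋯ + e_k)`, `eᵢ` the standard basis of the second factor `ℝ^k`.
(The same coordinate vectors serve as `e₀*, e₁*, …, e_k*` in the dual copy.) -/
def evec {k : ℕ} : Fin (k+1) → Fin k → ℝ :=
  Fin.cases (fun _ => -1) (fun i => Pi.single i 1)

open Filter Topology

lemma pairing_eq_dotProduct {n : ℕ} (x y : Fin n → ℝ) : pairing x y = x ⬝ᵥ y := rfl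

lemma continuous_pairing_left {n : ℕ} (u : Fin n → ℝ) : Continuous fun x => pairing x u := by
  unfold pairing; fun_prop

lemma IsLatticePt.exists_pairing_eq_int {n : ℕ} {x y : Fin n → ℝ} (hx : IsLatticePt x)
    (hy : IsLatticePt y) : ∃ z : ℤ, pairing x y = z := by
  choose a ha using hx
  choose b hb using hy
  exact ⟨∑ i, a i * b i, by simp [pairing, ha, hb]⟩

section minPair

variable {n : ℕ} {P : Set (Fin n → ℝ)}

lemma minPair_le (hP : IsCompact P) {x : Fin n → ℝ} (hx : x ∈ P) (u : Fin n → ℝ) :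
    minPair P u ≤ pairing x u :=
  csInf_le (hP.image (continuous_pairing_left u)).bddBelow (mem_image_of_mem _ hx)

lemma le_minPair_iff (hP : IsCompact P) (hne : P.Nonempty) {u : Fin n → ℝ} {c : ℝ} :
    c ≤ minPair P u ↔ ∀ x ∈ P, c ≤ pairing x u :=
  ⟨fun h _ hx => h.trans (minPair_le hP hx u),
    fun h => le_csInf (hne.image _) (forall_mem_image.2 h)⟩

lemma exists_pairing_eq_minPair (hP : IsCompact P) (hne : P.Nonempty) (u : Fin n → ℝ) :
    ∃ x ∈ P, pairing x u = minPair P u :=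
  (hP.image (continuous_pairing_left u)).sInf_mem (hne.image _)

lemma minPair_smul {c : ℝ} (hc : 0 ≤ c) (u : Fin n → ℝ) :
    minPair P (c • u) = c * minPair P u := by
  simp only [minPair, pairing_eq_dotProduct, dotProduct_smul, ← smul_eq_mul (a := c),
    ← Real.sInf_smul_of_nonneg hc, ← image_smul, image_image]

lemma minPair_zero : minPair P 0 = 0 := by
  simpa using minPair_smul le_rfl (0 : Fin n → ℝ)

lemma sum_mul_minPair_le (hP : IsCompact P) (hne : P.Nonempty) {ι : Type*} (t : Finset ι)
    {w : ι → ℝ} (hw : ∀ j ∈ t, 0 ≤ w j) (z : ι → Fin n → ℝ) :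
    ∑ j ∈ t, w j * minPair P (z j) ≤ minPair P (∑ j ∈ t, w j • z j) := by
  refine (le_minPair_iff hP hne).2 fun x hx => ?_
  simp only [pairing_eq_dotProduct, dotProduct_sum, dotProduct_smul, smul_eq_mul]
  exact Finset.sum_le_sum fun j hj => mul_le_mul_of_nonneg_left (minPair_le hP hx _) (hw j hj)

lemma minPair_nonpos (hP : IsCompact P) (h0 : 0 ∈ P) (u : Fin n → ℝ) : minPair P u ≤ 0 := by
  simpa [pairing] using minPair_le hP h0 u

lemma minPair_neg (hP : IsCompact P) (h0 : 0 ∈ interior P) {u : Fin n → ℝ} (hu : u ≠ 0) :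
    minPair P u < 0 := by
  have hev : ∀ᶠ t in 𝓝[>] (0 : ℝ), -(t • u) ∈ P := by
    refine eventually_nhdsWithin_of_eventually_nhds ?_
    refine (((continuous_id.smul continuous_const).neg.tendsto' (0 : ℝ) (0 : Fin n → ℝ)
      (by simp))).eventually ?_
    exact mem_interior_iff_mem_nhds.1 h0
  obtain ⟨t, ht, ht0⟩ := (hev.and self_mem_nhdsWithin).exists
  have hpos : 0 < u ⬝ᵥ u := by simpa using Matrix.dotProduct_self_star_pos_iff.2 hu
  calc minPair P u ≤ pairing (-(t • u)) u := minPair_le hP ht u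
    _ = -(t * (u ⬝ᵥ u)) := by simp [pairing_eq_dotProduct]
    _ < 0 := neg_neg_of_pos (mul_pos ht0 hpos)

end minPair

lemma minPair_sum {n : ℕ} {ι : Type*} [Fintype ι] {Δ : ι → Set (Fin n → ℝ)}
    (hΔ : ∀ i, IsCompact (Δ i)) (hne : ∀ i, (Δ i).Nonempty) (u : Fin n → ℝ) :
    minPair (∑ i, Δ i) u = ∑ i, minPair (Δ i) u := by
  refine IsLeast.csInf_eq ⟨?_, ?_⟩
  · choose x hxΔ hx using fun i => exists_pairing_eq_minPair (hΔ i) (hne i) u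
    refine ⟨∑ i, x i, (mem_fintype_sum _ _).2 ⟨x, hxΔ, rfl⟩, ?_⟩
    simp only [pairing_eq_dotProduct, sum_dotProduct] at hx ⊢
    exact Finset.sum_congr rfl fun i _ => hx i
  · rintro _ ⟨_, hy, rfl⟩
    obtain ⟨g, hg, rfl⟩ := (mem_fintype_sum _ _).1 hy
    simp only [pairing_eq_dotProduct, sum_dotProduct]
    exact Finset.sum_le_sum fun i _ => minPair_le (hΔ i) (hg i) u

lemma isCompact_sum {n : ℕ} {ι : Type*} [Fintype ι] {Δ : ι → Set (Fin n → ℝ)}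
    (hΔ : ∀ i, IsCompact (Δ i)) : IsCompact (∑ i, Δ i) :=
  Finset.sum_induction _ IsCompact (fun _ _ => IsCompact.add) (by simp)
    fun i _ => hΔ i

lemma mem_polarDual_iff {n : ℕ} {P : Set (Fin n → ℝ)} (hP : IsCompact P) (hne : P.Nonempty)
    {u : Fin n → ℝ} : u ∈ polarDual P ↔ -1 ≤ minPair P u :=
  (le_minPair_iff hP hne).symm

lemma minPair_sum_smul_eq {n : ℕ} {ι κ : Type*} [Fintype ι] {Δ : ι → Set (Fin n → ℝ)}
    (hΔ : ∀ i, IsCompact (Δ i)) (hne : ∀ i, (Δ i).Nonempty) (t : Finset κ) {w : κ → ℝ}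
    (hw : ∀ j ∈ t, 0 ≤ w j) (z : κ → Fin n → ℝ)
    (h : minPair (∑ i, Δ i) (∑ j ∈ t, w j • z j) ≤ ∑ j ∈ t, w j * minPair (∑ i, Δ i) (z j))
    (i : ι) : minPair (Δ i) (∑ j ∈ t, w j • z j) = ∑ j ∈ t, w j * minPair (Δ i) (z j) := by
  have hle : ∀ i ∈ Finset.univ, ∑ j ∈ t, w j * minPair (Δ i) (z j)
      ≤ minPair (Δ i) (∑ j ∈ t, w j • z j) :=
    fun i _ => sum_mul_minPair_le (hΔ i) (hne i) t hw z
  refine ((Finset.sum_eq_sum_iff_of_le hle).1 (le_antisymm (Finset.sum_le_sum hle) ?_)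
    i (Finset.mem_univ i)).symm
  simpa only [minPair_sum hΔ hne, Finset.mul_sum, Finset.sum_comm (s := t)] using h

lemma IsLatticePolytope.isCompact {n : ℕ} {P : Set (Fin n → ℝ)} (hP : IsLatticePolytope P) :
    IsCompact P := by
  obtain ⟨S, hS, -, rfl⟩ := hP
  exact hS.isCompact_convexHull (𝕜 := ℝ)

lemma IsLatticePolytope.exists_minPair_eq_int {n : ℕ} {P : Set (Fin n → ℝ)}
    (hP : IsLatticePolytope P) (hne : P.Nonempty) {u : Fin n → ℝ} (hu : IsLatticePt u) :
    ∃ z : ℤ, minPair P u = z := by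
  have hPc := hP.isCompact
  obtain ⟨x, hxP, hx⟩ := exists_pairing_eq_minPair hPc hne u
  obtain ⟨S, -, hSlat, rfl⟩ := hP
  obtain ⟨y, hyS, hyx⟩ := (((dotProductBilin ℝ ℝ).flip u).concaveOn
    convex_univ).exists_le_of_mem_convexHull (subset_univ S) hxP
  obtain ⟨z, hz⟩ := (hSlat y hyS).exists_pairing_eq_int hu
  refine ⟨z, le_antisymm ?_ ?_⟩
  · exact hz ▸ minPair_le hPc (subset_convexHull ℝ S hyS) u
  · exact hz ▸ hx ▸ hyx

lemma Convex.succ_nsmul_eq_smul {E : Type*} [AddCommGroup E] [Module ℝ E] {Q : Set E}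
    (hQ : Convex ℝ Q) : ∀ n : ℕ, (n + 1) • Q = ((n : ℝ) + 1) • Q
  | 0 => by simp
  | n + 1 => by
    rw [succ_nsmul, hQ.succ_nsmul_eq_smul n]
    nth_rw 2 [← one_smul ℝ Q]
    rw [← hQ.add_smul (by positivity) zero_le_one]
    push_cast
    rfl

lemma Convex.sum_image_add {E : Type*} [AddCommGroup E] [Module ℝ E] {Q : Set E}
    (hQ : Convex ℝ Q) {n : ℕ} (b : Fin (n+1) → E) :
    ∑ i, (fun y => y + b i) '' Q = (fun y => y + ∑ i, b i) '' (((n : ℝ) + 1) • Q) := by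
  simp only [← add_singleton, Finset.sum_add_distrib, finsetSum_singleton, Finset.sum_const,
    Finset.card_univ, Fintype.card_fin, hQ.succ_nsmul_eq_smul]

lemma Convex.smul_add_sum_smul_mem {E : Type*} [AddCommGroup E] [Module ℝ E] {s : Set E}
    (hs : Convex ℝ s) {ι : Type*} [Fintype ι] {a : E} {b : ι → E} (ha : a ∈ s)
    (hb : ∀ j, b j ∈ s) {r : ℝ} {δ : ι → ℝ} (hr : 0 ≤ r) (hδ : ∀ j, 0 ≤ δ j)
    (h1 : r + ∑ j, δ j = 1) : r • a + ∑ j, δ j • b j ∈ s := by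
  have := hs.sum_mem (t := Finset.univ) (w := fun o : Option ι => o.elim r δ)
    (z := fun o => o.elim a b) (by rintro (_ | j) _ <;> simp [hr, hδ]) (by simpa using h1)
    (by rintro (_ | j) _ <;> simp [ha, hb])
  simpa using this

section pairingV

variable {d k : ℕ}

lemma pairingV_eq (x y : Vdk d k) : pairingV x y = x.1 ⬝ᵥ y.1 + x.2 ⬝ᵥ y.2 := rfl

lemma pairingV_comm (x y : Vdk d k) : pairingV x y = pairingV y x := by
  simp only [pairingV_eq, dotProduct_comm]

lemma isLinearMap_pairingV_left (z : Vdk d k) : IsLinearMap ℝ (pairingV · z) :=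
  ⟨fun x y => by simp only [pairingV_eq, Prod.fst_add, Prod.snd_add, add_dotProduct]; ring,
    fun c x => by
      simp only [pairingV_eq, Prod.smul_fst, Prod.smul_snd, smul_dotProduct, smul_add]⟩

lemma isLinearMap_pairingV_right (x : Vdk d k) : IsLinearMap ℝ (pairingV x) := by
  rw [show pairingV x = (pairingV · x) from funext (pairingV_comm x)]
  exact isLinearMap_pairingV_left x

lemma continuous_pairingV_right (x : Vdk d k) : Continuous (pairingV x) := by
  unfold pairingV pairing; fun_prop

lemma exists_pairingV_eq (f : Vdk d k →ₗ[ℝ] ℝ) : ∃ w, ∀ z, f z = pairingV z w := by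
  refine ⟨(fun j => f (Pi.single j 1, 0), fun j => f (0, Pi.single j 1)), fun z => ?_⟩
  have hz : f z = f.comp (LinearMap.inl ℝ _ _) z.1 + f.comp (LinearMap.inr ℝ _ _) z.2 := by
    simp [← map_add]
  have hsingle : ∀ {m : ℕ} (i : Fin m), (fun j => if i = j then (1 : ℝ) else 0) = Pi.single i 1 :=
    fun i => funext fun j => by simp [Pi.single_apply, eq_comm]
  rw [hz, LinearMap.pi_apply_eq_sum_univ, LinearMap.pi_apply_eq_sum_univ]
  simp [pairingV_eq, dotProduct, hsingle]

lemma convex_polarDualV (A : Set (Vdk d k)) : Convex ℝ (polarDualV A) := by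
  simp only [polarDualV, ofPred_forall]
  exact convex_iInter₂ fun x _ => convex_halfSpace_ge (isLinearMap_pairingV_right x) (-1)

lemma polarDualV_convexHull (A : Set (Vdk d k)) :
    polarDualV (convexHull ℝ A) = polarDualV A := by
  refine Subset.antisymm (fun z hz x hx => hz x (subset_convexHull ℝ A hx)) fun z hz => ?_
  exact convexHull_min hz (convex_halfSpace_ge (isLinearMap_pairingV_left z) (-1))

lemma zero_mem_interior_polarDualV_convexHull {S : Set (Vdk d k)} (hS : S.Finite) :
    (0 : Vdk d k) ∈ interior (polarDualV (convexHull ℝ S)) := by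
  rw [polarDualV_convexHull]
  refine mem_interior.2 ⟨⋂ x ∈ S, {z | -1 < pairingV x z}, fun z hz x hx => ?_,
    hS.isOpen_biInter fun x _ => isOpen_lt continuous_const (continuous_pairingV_right x),
    mem_iInter₂.2 fun x _ => ?_⟩
  · exact (mem_iInter₂.1 hz x hx).le
  · simp [pairingV_eq]

lemma polarDualV_polarDualV {P : Set (Vdk d k)} (hconv : Convex ℝ P) (hclosed : IsClosed P)
    (h0 : 0 ∈ P) : polarDualV (polarDualV P) = P := by
  refine Subset.antisymm (fun y hy => ?_) fun x hx z hz => pairingV_comm z x ▸ hz x hx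
  by_contra hyP
  obtain ⟨f, u, hf, hfy⟩ := geometric_hahn_banach_closed_point hconv hclosed hyP
  obtain ⟨w, hw⟩ := exists_pairingV_eq (f : Vdk d k →ₗ[ℝ] ℝ)
  simp only [ContinuousLinearMap.coe_coe] at hw
  have hu : 0 < u := by simpa using hf 0 h0
  have hpair : ∀ x, pairingV x ((-u⁻¹) • w) = -(f x / u) := fun x => by
    rw [(isLinearMap_pairingV_right x).map_smul, ← hw, smul_eq_mul, div_eq_inv_mul, neg_mul]
  have hwP : (-u⁻¹) • w ∈ polarDualV P := fun x hx => by
    rw [hpair, neg_le_neg_iff]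
    exact ((div_lt_one hu).2 (hf x hx)).le
  have := hy _ hwP
  rw [pairingV_comm, hpair, neg_le_neg_iff, div_le_one hu] at this
  exact this.not_gt hfy

end pairingV

lemma IsLatticePt.natCast_smul_add {n : ℕ} {x y : Fin n → ℝ} (hx : IsLatticePt x)
    (hy : IsLatticePt y) (m : ℕ) : IsLatticePt ((m : ℝ) • x + y) := fun i => by
  obtain ⟨a, ha⟩ := hx i
  obtain ⟨b, hb⟩ := hy i
  exact ⟨m * a + b, by simp [ha, hb]⟩

lemma isLatticePt_single {n : ℕ} (j : Fin n) : IsLatticePt (Pi.single j (1 : ℝ)) :=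
  fun i => ⟨if i = j then 1 else 0, by simp [Pi.single_apply]⟩

lemma IsLatticePolytopeV.isClosed {d k : ℕ} {P : Set (Vdk d k)} (hP : IsLatticePolytopeV P) :
    IsClosed P := by
  obtain ⟨S, hS, -, rfl⟩ := hP
  exact (hS.isCompact_convexHull (𝕜 := ℝ)).isClosed

lemma IsLatticePolytopeV.image_natCast_smul_add {d k : ℕ} {P : Set (Vdk d k)}
    (hP : IsLatticePolytopeV P) (m : ℕ) {y : Vdk d k} (hy : IsLatticePtV y) :
    IsLatticePolytopeV ((fun p => p + y) '' ((m : ℝ) • P)) := by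
  obtain ⟨S, hS, hSlat, rfl⟩ := hP
  let f : Vdk d k →ᵃ[ℝ] Vdk d k := (m : ℝ) • AffineMap.id ℝ _ + AffineMap.const ℝ _ y
  refine ⟨f '' S, hS.image f, ?_, ?_⟩
  · rintro _ ⟨x, hx, rfl⟩
    exact ⟨(hSlat x hx).1.natCast_smul_add hy.1 m, (hSlat x hx).2.natCast_smul_add hy.2 m⟩
  · rw [← f.image_convexHull, ← image_smul, image_image]
    rfl

/-- The Cayley polytope `Conv(Δ₀ + e₀, Δ₁ + e₁, …, Δ_k + e_k)`. -/
def cayleyPolytope {d k : ℕ} (Δ : Fin (k+1) → Set (Fin d → ℝ)) : Set (Vdk d k) :=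
  convexHull ℝ (⋃ i, (fun x => ((x, evec i) : Vdk d k)) '' Δ i)

section cayleyPolytope

variable {d k : ℕ} {Δ : Fin (k+1) → Set (Fin d → ℝ)}

lemma convex_cayleyPolytope : Convex ℝ (cayleyPolytope Δ) :=
  convex_convexHull ℝ _

lemma sum_evec : ∑ i, evec (k := k) i = 0 := by
  ext j
  simp [evec, Fin.sum_univ_succ, Pi.single_apply]

lemma isLatticePt_evec (i : Fin (k+1)) : IsLatticePt (evec i) := by
  cases i using Fin.cases with
  | zero => exact fun _ => ⟨-1, by simp [evec]⟩
  | succ j => simpa [evec] using isLatticePt_single j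

lemma evec_zero_dotProduct (v : Fin k → ℝ) : evec 0 ⬝ᵥ v = -∑ j, v j := by
  simp [evec, dotProduct]

lemma evec_succ_dotProduct (j : Fin k) (v : Fin k → ℝ) : evec j.succ ⬝ᵥ v = v j := by
  simp [evec]

lemma mem_polarDualV_cayleyPolytope (hΔ : ∀ i, IsCompact (Δ i)) (hne : ∀ i, (Δ i).Nonempty)
    {z : Vdk d k} :
    z ∈ polarDualV (cayleyPolytope Δ) ↔ ∀ i, -1 ≤ minPair (Δ i) z.1 + evec i ⬝ᵥ z.2 := by
  rw [cayleyPolytope, polarDualV_convexHull]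
  refine ⟨fun hz i => ?_, fun hz p hp => ?_⟩
  · rw [← sub_le_iff_le_add, le_minPair_iff (hΔ i) (hne i)]
    exact fun x hx => sub_le_iff_le_add.2 (hz _ (mem_iUnion.2 ⟨i, x, hx, rfl⟩))
  · obtain ⟨i, x, hx, rfl⟩ := mem_iUnion.1 hp
    exact (hz i).trans ((add_le_add_iff_right _).2 (minPair_le (hΔ i) hx z.1))

lemma zero_mem_cayleyPolytope (h0 : 0 ∈ ∑ i, Δ i) : (0 : Vdk d k) ∈ cayleyPolytope Δ := by
  obtain ⟨g, hg, hsum⟩ := (mem_fintype_sum _ _).1 h0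
  have hzero : ∑ i, ((k : ℝ) + 1)⁻¹ • ((g i, evec i) : Vdk d k) = 0 := by
    rw [← Finset.smul_sum, Prod.ext_iff]
    simp [Prod.fst_sum, Prod.snd_sum, hsum, sum_evec]
  rw [← hzero]
  refine Convex.sum_mem (convex_convexHull ℝ _) (fun _ _ => by positivity) ?_
    fun i _ => subset_convexHull ℝ _ (mem_iUnion.2 ⟨i, g i, hg i, rfl⟩)
  simp [field]

lemma isLatticePolytopeV_cayleyPolytope (hlat : ∀ i, IsLatticePolytope (Δ i)) :
    IsLatticePolytopeV (cayleyPolytope Δ) := by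
  choose S hS hSlat hΔ using hlat
  refine ⟨⋃ i, (fun x => ((x, evec i) : Vdk d k)) '' S i,
    finite_iUnion fun i => (hS i).image _, ?_, ?_⟩
  · simp only [mem_iUnion, mem_image]
    rintro _ ⟨i, x, hx, rfl⟩
    exact ⟨hSlat i x hx, isLatticePt_evec i⟩
  · have himg : ∀ i, (fun x => ((x, evec i) : Vdk d k)) '' convexHull ℝ (S i)
        = convexHull ℝ ((fun x => ((x, evec i) : Vdk d k)) '' S i) := fun i => by
      rw [← prod_singleton, ← prod_singleton, convexHull_prod, convexHull_singleton]
    simp only [cayleyPolytope, hΔ, himg]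
    exact (convexHull ℝ).closure_iSup_closure _

end cayleyPolytope

lemma sum_smul_single_snd {d k : ℕ} (δ : Fin k → ℝ) :
    ∑ j, δ j • (((0 : Fin d → ℝ), Pi.single j 1) : Vdk d k) = (0, δ) := by
  ext j <;> simp [Prod.fst_sum, Prod.snd_sum, Finset.sum_apply, Pi.single_apply]

/-- `u ↦ u − Σᵢ₌₁ᵏ min⟨Δᵢ,u⟩ eᵢ*`. -/
def dualLift {d k : ℕ} (Δ : Fin (k+1) → Set (Fin d → ℝ)) (u : Fin d → ℝ) : Vdk d k :=
  (u, fun i => -minPair (Δ i.succ) u)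

/-- `∇̂₀`. -/
def hatNabla {d k : ℕ} (Δ : Fin (k+1) → Set (Fin d → ℝ)) : Set (Vdk d k) :=
  convexHull ℝ (dualLift Δ '' polarDual (∑ i, Δ i) ∪
    ⋃ j : Fin k, {(((0 : Fin d → ℝ), Pi.single j 1) : Vdk d k)})

section hatNabla

variable {d k : ℕ} {Δ : Fin (k+1) → Set (Fin d → ℝ)}

lemma convex_hatNabla : Convex ℝ (hatNabla Δ) :=
  convex_convexHull ℝ _

lemma dualLift_smul {c : ℝ} (hc : 0 ≤ c) (u : Fin d → ℝ) :
    dualLift Δ (c • u) = c • dualLift Δ u := by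
  ext j <;> simp [dualLift, minPair_smul hc]

lemma dualLift_zero : dualLift Δ 0 = 0 := by
  simpa using dualLift_smul (Δ := Δ) le_rfl 0

lemma smul_add_mem_polarDualV_cayleyPolytope_iff (hΔ : ∀ i, IsCompact (Δ i))
    (hne : ∀ i, (Δ i).Nonempty) {q : Vdk d k} :
    ((k : ℝ) + 1) • q + ((0 : Fin d → ℝ), fun _ => -1) ∈ polarDualV (cayleyPolytope Δ) ↔
      -1 ≤ minPair (Δ 0) q.1 - ∑ j, q.2 j ∧ ∀ j : Fin k, 0 ≤ minPair (Δ j.succ) q.1 + q.2 j := by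
  have hc : (0 : ℝ) < k + 1 := by positivity
  rw [mem_polarDualV_cayleyPolytope hΔ hne, Fin.forall_fin_succ]
  refine and_congr ?_ (forall_congr' fun j => ?_)
  · simp only [Prod.smul_fst, Prod.smul_snd, Prod.fst_add, Prod.snd_add, add_zero,
      minPair_smul hc.le, dotProduct_add, dotProduct_smul, evec_zero_dotProduct, smul_eq_mul]
    simp only [Finset.sum_neg_distrib, neg_neg, Finset.sum_const, Finset.card_univ,
      Fintype.card_fin, nsmul_eq_mul, mul_one]
    constructor <;> intro h <;> nlinarith
  · simp only [Prod.smul_fst, Prod.smul_snd, Prod.fst_add, Prod.snd_add, add_zero,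
      minPair_smul hc.le, dotProduct_add, dotProduct_smul, evec_succ_dotProduct, smul_eq_mul]
    constructor <;> intro h <;> nlinarith

lemma mem_polarDual_sum_iff (hΔ : ∀ i, IsCompact (Δ i)) (hne : ∀ i, (Δ i).Nonempty)
    {u : Fin d → ℝ} :
    u ∈ polarDual (∑ i, Δ i) ↔ -1 ≤ ∑ i, minPair (Δ i) u := by
  rw [mem_polarDual_iff (isCompact_sum hΔ) (Finset.sum_induction _ Set.Nonempty
    (fun _ _ => Nonempty.add) ⟨0, rfl⟩ fun i _ => hne i), minPair_sum hΔ hne]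

lemma hatNabla_subset (hΔ : ∀ i, IsCompact (Δ i)) (hne : ∀ i, (Δ i).Nonempty) :
    hatNabla Δ ⊆ {q : Vdk d k | ((k : ℝ) + 1) • q + ((0 : Fin d → ℝ), fun _ => -1) ∈
      polarDualV (cayleyPolytope Δ)} := by
  have hconv := (convex_polarDualV (cayleyPolytope Δ)).affine_preimage
    (((k : ℝ) + 1) • AffineMap.id ℝ (Vdk d k) + AffineMap.const ℝ (Vdk d k)
      ((0 : Fin d → ℝ), fun _ => (-1 : ℝ)))
  refine convexHull_min ?_ hconv
  simp only [smul_add_mem_polarDualV_cayleyPolytope_iff hΔ hne]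
  rintro q (⟨u, hu, rfl⟩ | hq)
  · rw [mem_polarDual_sum_iff hΔ hne, Fin.sum_univ_succ] at hu
    simp only [mem_ofPred_eq, dualLift, Finset.sum_neg_distrib, sub_neg_eq_add, add_neg_cancel,
      le_refl, implies_true, and_true]
    exact hu
  · obtain ⟨j, rfl⟩ := mem_iUnion.1 hq
    simpa [minPair_zero, Pi.single_apply] using fun i => by split_ifs <;> norm_num

lemma mem_hatNabla (hΔ : ∀ i, IsCompact (Δ i)) (hne : ∀ i, (Δ i).Nonempty)
    (h0 : (0 : Fin d → ℝ) ∈ interior (∑ i, Δ i)) {q : Vdk d k}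
    (hq₀ : -1 ≤ minPair (Δ 0) q.1 - ∑ j, q.2 j)
    (hq : ∀ j : Fin k, 0 ≤ minPair (Δ j.succ) q.1 + q.2 j) : q ∈ hatNabla Δ := by
  obtain ⟨u, v⟩ := q
  dsimp only at hq₀ hq
  have hcpt := isCompact_sum hΔ
  set δ : Fin k → ℝ := fun j => minPair (Δ j.succ) u + v j
  set r : ℝ := 1 - ∑ j, δ j with hr_def
  have hr : -∑ i, minPair (Δ i) u ≤ r := by
    simp only [hr_def, δ, Fin.sum_univ_succ, Finset.sum_add_distrib]
    linarith
  have hr₀ : 0 ≤ r := by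
    linarith [minPair_sum hΔ hne u ▸ minPair_nonpos hcpt (interior_subset h0) u]
  -- `r = 0` is allowed: then `u = 0`, and `r⁻¹ = 0` makes the decomposition below degenerate.
  have hru : r • r⁻¹ • u = u := by
    rcases hr₀.eq_or_lt with hr₀ | hr₀
    · suffices u = 0 by simp [this]
      by_contra hu
      linarith [minPair_sum hΔ hne u ▸ minPair_neg hcpt h0 hu]
    · exact smul_inv_smul₀ hr₀.ne' u
  have hw : r⁻¹ • u ∈ polarDual (∑ i, Δ i) := by
    rw [mem_polarDual_sum_iff hΔ hne]
    simp only [minPair_smul (inv_nonneg.2 hr₀), ← Finset.mul_sum]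
    calc -1 ≤ -(r⁻¹ * r) := neg_le_neg inv_mul_le_one
      _ = r⁻¹ * -r := by ring
      _ ≤ _ := mul_le_mul_of_nonneg_left (neg_le.1 hr) (inv_nonneg.2 hr₀)
  have hdecomp : ((u, v) : Vdk d k)
      = r • dualLift Δ (r⁻¹ • u) + ∑ j, δ j • (((0 : Fin d → ℝ), Pi.single j 1) : Vdk d k) := by
    rw [← dualLift_smul hr₀, hru, sum_smul_single_snd]
    ext j <;> simp [dualLift, δ]
  rw [hdecomp]
  refine (convex_convexHull ℝ _).smul_add_sum_smul_mem ?_ (fun j => ?_) hr₀ hq (sub_add_cancel _ _)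
  · exact subset_convexHull ℝ _ (Or.inl ⟨_, hw, rfl⟩)
  · exact subset_convexHull ℝ _ (Or.inr (mem_iUnion.2 ⟨j, rfl⟩))

lemma image_add_smul_hatNabla (hΔ : ∀ i, IsCompact (Δ i)) (hne : ∀ i, (Δ i).Nonempty)
    (h0 : (0 : Fin d → ℝ) ∈ interior (∑ i, Δ i)) :
    (fun y => y + (((0 : Fin d → ℝ), fun _ => -1) : Vdk d k)) '' (((k : ℝ) + 1) • hatNabla Δ)
      = polarDualV (cayleyPolytope Δ) := by
  have hc : (k : ℝ) + 1 ≠ 0 := by positivity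
  ext z
  constructor
  · rintro ⟨_, ⟨q, hq, rfl⟩, rfl⟩
    exact hatNabla_subset hΔ hne hq
  · intro hz
    set q := ((k : ℝ) + 1)⁻¹ • (z - (((0 : Fin d → ℝ), fun _ => -1) : Vdk d k))
    have hq := (smul_add_mem_polarDualV_cayleyPolytope_iff hΔ hne (q := q)).1
      (by rwa [smul_inv_smul₀ hc, sub_add_cancel])
    exact ⟨_, smul_mem_smul_set (mem_hatNabla hΔ hne h0 hq.1 hq.2),
      by simp only [q, smul_inv_smul₀ hc, sub_add_cancel]⟩

lemma dualLift_sum_smul (hΔ : ∀ i, IsCompact (Δ i)) (hne : ∀ i, (Δ i).Nonempty)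
    {ι : Type*} (t : Finset ι) {w : ι → ℝ} (hw : ∀ j ∈ t, 0 ≤ w j)
    (z : ι → Fin d → ℝ)
    (h : ∑ i, minPair (Δ i) (∑ j ∈ t, w j • z j) ≤ ∑ j ∈ t, w j * ∑ i, minPair (Δ i) (z j)) :
    dualLift Δ (∑ j ∈ t, w j • z j) = ∑ j ∈ t, w j • dualLift Δ (z j) := by
  have := minPair_sum_smul_eq hΔ hne t hw z (by simpa only [minPair_sum hΔ hne] using h)
  ext i <;> simp [dualLift, Prod.fst_sum, Prod.snd_sum, this, Finset.sum_apply]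

lemma dualLift_mem_convexHull (hΔ : ∀ i, IsCompact (Δ i)) (hne : ∀ i, (Δ i).Nonempty)
    (h0 : (0 : Fin d → ℝ) ∈ interior (∑ i, Δ i))
    {S : Set (Fin d → ℝ)} (hS : polarDual (∑ i, Δ i) = convexHull ℝ S) {u : Fin d → ℝ}
    (hu : u ∈ polarDual (∑ i, Δ i)) : dualLift Δ u ∈ convexHull ℝ (dualLift Δ '' insert 0 S) := by
  rcases eq_or_ne u 0 with rfl | hu₀
  · exact subset_convexHull ℝ _ ⟨0, mem_insert _ _, rfl⟩
  rw [mem_polarDual_sum_iff hΔ hne] at hu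
  set μ := -∑ i, minPair (Δ i) u
  have hμ : 0 < μ := neg_pos.2 (minPair_sum hΔ hne u ▸ minPair_neg (isCompact_sum hΔ) h0 hu₀)
  have hμu : ∑ i, minPair (Δ i) (μ⁻¹ • u) = -1 := by
    simp only [minPair_smul (inv_nonneg.2 hμ.le), ← Finset.mul_sum]
    rw [← neg_neg (∑ i, _), mul_neg, inv_mul_cancel₀ hμ.ne']
  have hw : μ⁻¹ • u ∈ convexHull ℝ S := hS ▸ (mem_polarDual_sum_iff hΔ hne).2 hμu.ge
  obtain ⟨ι, _, t, z, ht₀, ht₁, hz, hwz⟩ := mem_convexHull_iff_exists_fintype.1 hw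
  have hzS : ∀ j, -1 ≤ ∑ i, minPair (Δ i) (z j) := fun j =>
    (mem_polarDual_sum_iff hΔ hne).1 (hS ▸ subset_convexHull ℝ S (hz j))
  have hlift : dualLift Δ (μ⁻¹ • u) ∈ convexHull ℝ (dualLift Δ '' insert 0 S) := by
    rw [← hwz, dualLift_sum_smul hΔ hne _ (fun j _ => ht₀ j) z]
    · exact (convex_convexHull ℝ _).sum_mem (fun j _ => ht₀ j) ht₁
        fun j _ => subset_convexHull ℝ _ ⟨z j, mem_insert_of_mem _ (hz j), rfl⟩
    · calc ∑ i, minPair (Δ i) (∑ j, t j • z j) = ∑ j, t j * -1 := by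
            rw [hwz, hμu, ← Finset.sum_mul, ht₁, one_mul]
        _ ≤ _ := Finset.sum_le_sum fun j _ => mul_le_mul_of_nonneg_left (hzS j) (ht₀ j)
  have hconv : dualLift Δ u = μ • dualLift Δ (μ⁻¹ • u) + (1 - μ) • dualLift Δ 0 := by
    rw [dualLift_zero, smul_zero, add_zero, ← dualLift_smul hμ.le, smul_inv_smul₀ hμ.ne']
  rw [hconv]
  exact convex_convexHull ℝ _ hlift (subset_convexHull ℝ _ ⟨0, mem_insert _ _, rfl⟩) hμ.le
    (by linarith) (by ring)

lemma hatNabla_eq_convexHull (hΔ : ∀ i, IsCompact (Δ i)) (hne : ∀ i, (Δ i).Nonempty)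
    (h0 : (0 : Fin d → ℝ) ∈ interior (∑ i, Δ i))
    {S : Set (Fin d → ℝ)} (hS : polarDual (∑ i, Δ i) = convexHull ℝ S) :
    hatNabla Δ = convexHull ℝ (dualLift Δ '' insert 0 S ∪
      ⋃ j : Fin k, {(((0 : Fin d → ℝ), Pi.single j 1) : Vdk d k)}) := by
  have h0S : (0 : Fin d → ℝ) ∈ polarDual (∑ i, Δ i) := fun x _ => by simp [pairing]
  refine (convexHull_min (union_subset ?_ (subset_union_right.trans (subset_convexHull ℝ _)))
    (convex_convexHull ℝ _)).antisymm (convexHull_mono (union_subset_union_left _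
      (image_mono (insert_subset h0S (hS ▸ subset_convexHull ℝ S)))))
  rintro _ ⟨u, hu, rfl⟩
  exact convexHull_mono subset_union_left (dualLift_mem_convexHull hΔ hne h0 hS hu)

end hatNabla

lemma isLatticePolytopeV_hatNabla {d k : ℕ} {Δ : Fin (k+1) → Set (Fin d → ℝ)}
    (hlat : ∀ i, IsLatticePolytope (Δ i)) (hne : ∀ i, (Δ i).Nonempty)
    (h0 : (0 : Fin d → ℝ) ∈ interior (∑ i, Δ i))
    (hdual : IsLatticePolytope (polarDual (∑ i, Δ i))) :
    IsLatticePolytopeV (hatNabla Δ) := by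
  obtain ⟨S, hS, hSlat, hSeq⟩ := hdual
  refine ⟨_, ((hS.insert 0).image _).union (finite_iUnion fun _ => finite_singleton _), ?_,
    hatNabla_eq_convexHull (fun i => (hlat i).isCompact) hne h0 hSeq⟩
  rintro _ (⟨z, hz, rfl⟩ | hj)
  · have hz : IsLatticePt z := by
      rcases hz with rfl | hz
      exacts [fun _ => ⟨0, by simp⟩, hSlat z hz]
    refine ⟨hz, fun j => ?_⟩
    obtain ⟨m, hm⟩ := (hlat j.succ).exists_minPair_eq_int (hne _) hz
    exact ⟨-m, by simp [dualLift, hm]⟩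
  · obtain ⟨j, rfl⟩ := mem_iUnion.1 hj
    exact ⟨fun _ => ⟨0, by simp⟩, isLatticePt_single j⟩

lemma Convex.sum_cases_image_sub_single {d k : ℕ} {Q : Set (Vdk d k)} (hQ : Convex ℝ Q) :
    ∑ i, (Fin.cases Q fun j => (fun y => y - (((0 : Fin d → ℝ), Pi.single j 1) : Vdk d k)) '' Q :
        Fin (k+1) → Set (Vdk d k)) i
      = (fun y => y + (((0 : Fin d → ℝ), fun _ => -1) : Vdk d k)) '' (((k : ℝ) + 1) • Q) := by
  set b : Fin (k+1) → Vdk d k := Fin.cases 0 fun j => -((0 : Fin d → ℝ), Pi.single j 1)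
  have hb : ∑ i, b i = ((0 : Fin d → ℝ), fun _ => -1) := by
    simpa [b, Fin.sum_univ_succ] using sum_smul_single_snd (d := d) fun _ : Fin k => (-1 : ℝ)
  rw [← hb, ← hQ.sum_image_add]
  refine Finset.sum_congr rfl fun i _ => ?_
  cases i using Fin.cases <;> simp [b, sub_eq_add_neg]

/-- `∇̂₀ + ⋯ + ∇̂_k = (k+1)∇̂₀ + e₀*` is a reflexive polytope in `ℝ^d ⊕ ℝ^k`
whose dual is `Conv(Δ₀ + e₀, Δ₁ + e₁, …, Δ_k + e_k)`. -/
theorem hatNabla_sum_reflexive {d k : ℕ}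
    (Δ : Fin (k+1) → Set (Fin d → ℝ))
    (hlat : ∀ i, IsLatticePolytope (Δ i))
    (hrefl : IsReflexive (∑ i, Δ i))
    -- ∇̂₀ = Conv({u − Σᵢ₌₁ᵏ min⟨Δᵢ,u⟩eᵢ* : u ∈ Δ*} ∪ {e₁*, …, e_k*})
    (Q : Set (Vdk d k))
    (hQ : Q = convexHull ℝ
        ((fun u => ((u, fun i : Fin k => -(minPair (Δ i.succ) u)) : Vdk d k)) ''
            polarDual (∑ i, Δ i) ∪
          ⋃ i : Fin k, {(((0 : Fin d → ℝ), Pi.single i 1) : Vdk d k)}))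
    -- ∇̂ᵢ = ∇̂₀ − eᵢ* for i = 1, …, k
    (Nhat : Fin (k+1) → Set (Vdk d k))
    (hNhat : Nhat = Fin.cases Q
        (fun i => (fun y => y - (((0 : Fin d → ℝ), Pi.single i 1) : Vdk d k)) '' Q)) :
    -- ∇̂₀ + ∇̂₁ + ⋯ + ∇̂_k = (k+1)∇̂₀ + e₀*
    (∑ i, Nhat i =
      (fun y => y + (((0 : Fin d → ℝ), fun _ => -1) : Vdk d k)) '' (((k : ℝ) + 1) • Q)) ∧
    -- it is a reflexive polytope w.r.t. the lattice ℤ^d ⊕ ℤ^k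
    IsReflexiveV (∑ i, Nhat i) ∧
    -- its dual reflexive polytope is Conv(Δ₀ + e₀, Δ₁ + e₁, …, Δ_k + e_k)
    polarDualV (∑ i, Nhat i) =
      convexHull ℝ (⋃ i : Fin (k+1), (fun x => ((x, evec i) : Vdk d k)) '' Δ i) := by
  obtain ⟨-, h0, hdual⟩ := hrefl
  have hΔ : ∀ i, IsCompact (Δ i) := fun i => (hlat i).isCompact
  have hne : ∀ i, (Δ i).Nonempty := fun i => by
    obtain ⟨g, hg, -⟩ := (mem_fintype_sum _ _).1 (interior_subset h0)
    exact ⟨g i, hg i⟩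
  replace hQ : Q = hatNabla Δ := hQ
  subst hQ
  have hsum := hNhat ▸ convex_hatNabla.sum_cases_image_sub_single
  have hpolar := hsum.trans (image_add_smul_hatNabla hΔ hne h0)
  have hcayley := isLatticePolytopeV_cayleyPolytope hlat
  have hbipolar : polarDualV (∑ i, Nhat i) = cayleyPolytope Δ := by
    rw [hpolar, polarDualV_polarDualV convex_cayleyPolytope hcayley.isClosed
      (zero_mem_cayleyPolytope (interior_subset h0))]
  refine ⟨hsum, ⟨?_, ?_, hbipolar ▸ hcayley⟩, hbipolar⟩
  · have := (isLatticePolytopeV_hatNabla hlat hne h0 hdual).image_natCast_smul_add (k + 1)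
      (y := ((0 : Fin d → ℝ), fun _ => -1)) ⟨fun _ => ⟨0, by simp⟩, fun _ => ⟨-1, by simp⟩⟩
    rwa [hsum, ← Nat.cast_succ]
  · obtain ⟨S, hS, -, hSeq⟩ := hcayley
    rw [hpolar, hSeq]
    exact zero_mem_interior_polarDualV_convexHull hS
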